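/- For every vertex v of G and every i ∈ {1,…,k}, Pr[v ∈ 𝓘 and v ∈ C_i] ≥ (1/5) · Pr[v ∈ C_i]; equivalently, conditioned on v ∈ C_i, the vertex v joins the independent set 𝓘 with probability at least 1/5. -/

import Mathlib

open MeasureTheory Real
open scoped ENNReal

/-- `log* x`: the least `n` such that the `n`-fold iterated natural logarithm of `x` is `≤ 1`. -/
noncomputable def logStar (x : ℝ) : ℕ := sInf {n : ℕ | Real.log^[n] x ≤ 1}

/-- Auxiliary sequence: `aRec 0 = 5`, `aRec (n+1) = exp (aRec n - 3)`. -/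
noncomputable def aRec : ℕ → ℝ
  | 0 => 5
  | n + 1 => Real.exp (aRec n - 3)

/-- Paper-indexed sequence `a_i`: `aP 1 = 5` and `aP (i+1) = exp (aP i - 3)` for `i ≥ 1`. -/
noncomputable def aP (i : ℕ) : ℝ := aRec (i - 1)

/-- `b_i = a_i / Δ`. -/
noncomputable def bP (Δ i : ℕ) : ℝ := aP i / Δ

/-- `k = ⌊(log* Δ) / 10⌋`. -/
noncomputable def kP (Δ : ℕ) : ℕ := logStar Δ / 10

/-- `v ∈ C`: `r v ∈ I_i = (b_i, b_{i+1}]` for some `i ∈ {1,…,k}` and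
`r u ∈ J_i = (b_i, 1]` for every neighbor `u` of `v`. -/
def isCand {V : Type*} (G : SimpleGraph V) (Δ : ℕ) (r : V → ℝ) (v : V) : Prop :=
  ∃ i ∈ Finset.Icc 1 (kP Δ), r v ∈ Set.Ioc (bP Δ i) (bP Δ (i + 1)) ∧
    ∀ u, G.Adj v u → r u ∈ Set.Ioc (bP Δ i) 1

/-- `v ∈ C_i`: `v` is a candidate with rank in `I_i`. -/
def isCandAt {V : Type*} (G : SimpleGraph V) (Δ : ℕ) (r : V → ℝ) (i : ℕ) (v : V) : Prop :=
  isCand G Δ r v ∧ r v ∈ Set.Ioc (bP Δ i) (bP Δ (i + 1))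

/-- `v ∈ 𝓘`: `v` is a candidate and no neighbor of `v` is a candidate. -/
def inIS {V : Type*} (G : SimpleGraph V) (Δ : ℕ) (r : V → ℝ) (v : V) : Prop :=
  isCand G Δ r v ∧ ∀ u, G.Adj v u → ¬ isCand G Δ r u

/-- The ranks are independent and uniform on `[0,1]`: product Lebesgue measure on `[0,1]^V`. -/
noncomputable def rankMeasure (V : Type*) [Fintype V] : Measure (V → ℝ) :=
  Measure.pi fun _ => (volume : Measure ℝ).restrict (Set.Icc 0 1)

/-! ### Auxiliary analytic lemmas -/

lemma exp_two_ge : (5:ℝ) ≤ Real.exp 2 := by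
  have h := Real.exp_one_gt_d9
  have h2 : Real.exp 2 = Real.exp 1 * Real.exp 1 := by
    rw [← Real.exp_add]; norm_num
  nlinarith [Real.exp_pos 1]

lemma aRec_ge (n : ℕ) : 5 ≤ aRec n := by
  induction n with
  | zero => norm_num [aRec]
  | succ n ih =>
      have : Real.exp 2 ≤ Real.exp (aRec n - 3) := Real.exp_le_exp.2 (by linarith)
      simpa [aRec] using le_trans exp_two_ge this

lemma aRec_le_succ (n : ℕ) : aRec n ≤ aRec (n+1) := by
  have h5 := aRec_ge n
  have h1 : Real.exp (aRec n - 3) = Real.exp 2 * Real.exp (aRec n - 5) := by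
    rw [← Real.exp_add]; ring_nf
  have h2 : aRec n - 5 + 1 ≤ Real.exp (aRec n - 5) := Real.add_one_le_exp _
  have h3 : (5:ℝ) ≤ Real.exp 2 := exp_two_ge
  have h4 : (0:ℝ) < Real.exp (aRec n - 5) := Real.exp_pos _
  show aRec n ≤ Real.exp (aRec n - 3)
  rw [h1]
  nlinarith

lemma aRec_mono : Monotone aRec := monotone_nat_of_le_succ aRec_le_succ

lemma aP_mono : Monotone aP := fun m n h => aRec_mono (Nat.sub_le_sub_right h 1)

lemma aP_ge (n : ℕ) : 5 ≤ aP n := aRec_ge _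

lemma logStar_gt {x : ℝ} {m : ℕ} (h : m < logStar x) : 1 < Real.log^[m] x := by
  by_contra hc
  push_neg at hc
  exact absurd (Nat.sInf_le (show m ∈ {n : ℕ | Real.log^[n] x ≤ 1} from hc)) (not_le.2 h)

lemma exp_iter_lt {x : ℝ} : ∀ m : ℕ, (∀ j ≤ m, 1 < Real.log^[j] x) → Real.exp^[m] 1 < x := by
  intro m
  induction m generalizing x with
  | zero => intro h; simpa using h 0 le_rfl
  | succ n ih =>
      intro h
      have hx : (1:ℝ) < x := by simpa using h 0 (Nat.zero_le _)
      have hlog : Real.exp^[n] 1 < Real.log x := by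
        apply ih
        intro j hj
        have := h (j+1) (Nat.succ_le_succ hj)
        simpa [Function.iterate_succ_apply] using this
      have := (Real.lt_log_iff_exp_lt (lt_trans one_pos hx)).1 hlog
      simpa [Function.iterate_succ_apply'] using this

lemma iter_exp_one_le (m : ℕ) : ∀ n, m ≤ n → Real.exp^[m] 1 ≤ Real.exp^[n] 1 := by
  have hstep : ∀ k : ℕ, Real.exp^[k] 1 ≤ Real.exp^[k+1] 1 := by
    intro k
    rw [Function.iterate_succ_apply']
    have := Real.add_one_le_exp (Real.exp^[k] 1)
    linarith
  intro n hn
  exact monotone_nat_of_le_succ hstep hn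

lemma e_mul_iter (m : ℕ) : Real.exp 1 * Real.exp^[m] 1 ≤ Real.exp^[m+1] 1 := by
  rw [Function.iterate_succ_apply']
  set z := Real.exp^[m] 1 with hz
  have h1 : Real.exp z = Real.exp 1 * Real.exp (z - 1) := by rw [← Real.exp_add]; ring_nf
  have h2 : z ≤ Real.exp (z-1) := by
    have := Real.add_one_le_exp (z-1); linarith
  rw [h1]
  have := Real.exp_pos 1
  nlinarith

lemma aRec_le_iter (n : ℕ) : aRec n ≤ Real.exp^[n+2] 1 := by
  induction n with
  | zero =>
      have h1 : Real.exp^[2] 1 = Real.exp (Real.exp 1) := by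
        simp [Function.iterate_succ_apply']
      have h2 : Real.exp 2 ≤ Real.exp (Real.exp 1) := by
        apply Real.exp_le_exp.2
        have := Real.exp_one_gt_d9; linarith
      show aRec 0 ≤ Real.exp^[0+2] 1
      rw [show aRec 0 = 5 from rfl, show (0+2 : ℕ) = 2 from rfl, h1]
      linarith [exp_two_ge]
  | succ n ih =>
      show Real.exp (aRec n - 3) ≤ Real.exp^[n+3] 1
      have h : Real.exp^[n+3] 1 = Real.exp (Real.exp^[n+2] 1) := by
        rw [Function.iterate_succ_apply']
      rw [h]
      exact Real.exp_le_exp.2 (by linarith)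

lemma key_bound {Δ i : ℕ} (hi1 : 1 ≤ i) (hik : i ≤ kP Δ) :
    Real.exp 1 * aP (i+1) ≤ (Δ : ℝ) := by
  have h10 : 10 * i ≤ logStar (Δ : ℝ) := by
    calc 10 * i ≤ 10 * kP Δ := by omega
    _ ≤ logStar (Δ:ℝ) := by unfold kP at *; omega
  have hΔ : Real.exp^[10*i - 1] 1 < (Δ : ℝ) := by
    apply exp_iter_lt
    intro j hj
    exact logStar_gt (by omega)
  have h1 : aP (i+1) = aRec i := by simp [aP]
  have h2 : Real.exp 1 * aRec i ≤ Real.exp^[i+3] 1 := by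
    calc Real.exp 1 * aRec i ≤ Real.exp 1 * Real.exp^[i+2] 1 := by
          have := aRec_le_iter i
          have := Real.exp_pos 1
          nlinarith
    _ ≤ Real.exp^[i+3] 1 := e_mul_iter (i+2)
  have h3 : Real.exp^[i+3] 1 ≤ Real.exp^[10*i-1] 1 := iter_exp_one_le _ _ (by omega)
  rw [h1]; linarith

/-! ### Auxiliary measure lemmas -/

/-- The uniform measure on `[0,1]`. -/
noncomputable def mu0 : Measure ℝ := (volume : Measure ℝ).restrict (Set.Icc 0 1)

instance : IsProbabilityMeasure mu0 := by
  constructor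
  rw [mu0, Measure.restrict_apply_univ]
  simp [Real.volume_Icc]

lemma mu0_Ioc {x y : ℝ} (hx : 0 ≤ x) (hy : y ≤ 1) :
    mu0 (Set.Ioc x y) = ENNReal.ofReal (y - x) := by
  rw [mu0, Measure.restrict_apply measurableSet_Ioc]
  rcases le_or_gt y x with h | h
  · rw [Set.Ioc_eq_empty (not_lt.2 h), Set.empty_inter, measure_empty, Eq.comm,
      ENNReal.ofReal_eq_zero]
    linarith
  · rw [Set.inter_eq_self_of_subset_left
      (Set.Ioc_subset_Icc_self.trans (Set.Icc_subset_Icc hx hy))]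
    exact Real.volume_Ioc

lemma rankMeasure_eq (V : Type*) [Fintype V] :
    rankMeasure V = Measure.pi (fun _ : V => mu0) := rfl

/-! ### Product computations -/

lemma prod_ite_neighbor {V : Type*} [Fintype V] [DecidableEq V] (G : SimpleGraph V)
    [DecidableRel G.Adj] (v : V) {M : Type*} [CommMonoid M] (x y : M) :
    (∏ w : V, (if w = v then x else if G.Adj v w then y else 1))
      = x * y ^ (G.degree v) := by
  rw [← Finset.mul_prod_erase Finset.univ _ (Finset.mem_univ v), if_pos rfl]
  congr 1
  have hsub : G.neighborFinset v ⊆ Finset.univ.erase v := by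
    intro w hw
    rw [SimpleGraph.mem_neighborFinset] at hw
    exact Finset.mem_erase.2 ⟨fun h => G.irrefl (h ▸ hw), Finset.mem_univ w⟩
  rw [← Finset.prod_subset hsub (by
    intro w _ hw
    rw [SimpleGraph.mem_neighborFinset] at hw
    have hwv : w ≠ v := by
      rintro rfl
      exact (Finset.notMem_erase w Finset.univ) (by assumption)
    rw [if_neg hwv, if_neg hw])]
  rw [Finset.prod_congr rfl (fun w hw => ?_), Finset.prod_const,
    SimpleGraph.card_neighborFinset_eq_degree]
  rw [SimpleGraph.mem_neighborFinset] at hw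
  have hwv : w ≠ v := fun h => G.irrefl (h ▸ hw)
  rw [if_neg hwv, if_pos hw]

lemma prod_ite_two {V : Type*} [Fintype V] [DecidableEq V] (G : SimpleGraph V)
    [DecidableRel G.Adj] {v u : V} (hadj : G.Adj v u) (htri : G.CliqueFree 3)
    {M : Type*} [CommMonoid M] (x y : M) :
    (∏ w : V, (if w = v ∨ w = u then x else if G.Adj u w ∨ G.Adj v w then y else 1))
      = (x * x) * (y ^ (G.degree u - 1) * y ^ (G.degree v - 1)) := by
  have hvu : v ≠ u := G.ne_of_adj hadj
  set s1 := (G.neighborFinset u).erase v with hs1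
  set s2 := (G.neighborFinset v).erase u with hs2
  have hdisj : Disjoint s1 s2 := by
    rw [Finset.disjoint_left]
    intro w hw1 hw2
    rw [hs1, Finset.mem_erase, SimpleGraph.mem_neighborFinset] at hw1
    rw [hs2, Finset.mem_erase, SimpleGraph.mem_neighborFinset] at hw2
    exact htri {v, u, w} (SimpleGraph.is3Clique_triple_iff.2 ⟨hadj, hw2.2, hw1.2⟩)
  have hu_not : u ∉ s1 ∪ s2 := by
    rw [Finset.mem_union, hs1, hs2]
    rintro (h | h)
    · exact G.irrefl ((SimpleGraph.mem_neighborFinset _ _ _).1 (Finset.mem_of_mem_erase h))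
    · exact (Finset.notMem_erase u _) h
  have hv_not : v ∉ insert u (s1 ∪ s2) := by
    rw [Finset.mem_insert, Finset.mem_union, hs1, hs2]
    rintro (h | h | h)
    · exact hvu h
    · exact (Finset.notMem_erase v _) h
    · exact G.irrefl ((SimpleGraph.mem_neighborFinset _ _ _).1 (Finset.mem_of_mem_erase h))
  set D := insert v (insert u (s1 ∪ s2)) with hD
  rw [← Finset.prod_subset (Finset.subset_univ D) (by
    intro w _ hw
    rw [hD, Finset.mem_insert, Finset.mem_insert, Finset.mem_union, hs1, hs2] at hw
    push_neg at hw
    obtain ⟨hw1, hw2, hw3, hw4⟩ := hw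
    rw [Finset.mem_erase, SimpleGraph.mem_neighborFinset] at hw3 hw4
    rw [if_neg (by tauto), if_neg (by tauto)])]
  rw [hD, Finset.prod_insert hv_not, Finset.prod_insert hu_not, Finset.prod_union hdisj]
  rw [if_pos (Or.inl rfl), if_pos (Or.inr rfl)]
  have h1 : ∏ w ∈ s1, (if w = v ∨ w = u then x else if G.Adj u w ∨ G.Adj v w then y else 1)
      = y ^ (G.degree u - 1) := by
    rw [Finset.prod_congr rfl (fun w hw => ?_), Finset.prod_const, hs1,
      Finset.card_erase_of_mem (by rw [SimpleGraph.mem_neighborFinset]; exact hadj.symm),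
      SimpleGraph.card_neighborFinset_eq_degree]
    rw [hs1, Finset.mem_erase, SimpleGraph.mem_neighborFinset] at hw
    have hwu : w ≠ u := fun h => G.irrefl (h ▸ hw.2)
    rw [if_neg (by tauto), if_pos (Or.inl hw.2)]
  have h2 : ∏ w ∈ s2, (if w = v ∨ w = u then x else if G.Adj u w ∨ G.Adj v w then y else 1)
      = y ^ (G.degree v - 1) := by
    rw [Finset.prod_congr rfl (fun w hw => ?_), Finset.prod_const, hs2,
      Finset.card_erase_of_mem (by rw [SimpleGraph.mem_neighborFinset]; exact hadj),
      SimpleGraph.card_neighborFinset_eq_degree]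
    rw [hs2, Finset.mem_erase, SimpleGraph.mem_neighborFinset] at hw
    have hwv : w ≠ v := fun h => G.irrefl (h ▸ hw.2)
    rw [if_neg (by tauto), if_pos (Or.inr hw.2)]
  rw [h1, h2, mul_assoc]


lemma bP_mono (Δ : ℕ) : Monotone (bP Δ) := by
  intro m n h
  unfold bP
  rcases Nat.eq_zero_or_pos Δ with h0 | h0
  · simp [h0]
  · exact (div_le_div_iff_of_pos_right (by exact_mod_cast h0)).2 (aP_mono h)

lemma isCandAt_char {V : Type*} {G : SimpleGraph V} {Δ : ℕ} {r : V → ℝ} {i : ℕ} {v : V}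
    (hi : i ∈ Finset.Icc 1 (kP Δ)) :
    isCandAt G Δ r i v ↔
      (r v ∈ Set.Ioc (bP Δ i) (bP Δ (i+1)) ∧ ∀ w, G.Adj v w → r w ∈ Set.Ioc (bP Δ i) 1) := by
  constructor
  · rintro ⟨⟨j, hj, hrv, hnb⟩, hvi⟩
    refine ⟨hvi, fun w hadj => ?_⟩
    obtain ⟨h31, h32⟩ := Set.mem_Ioc.1 (hnb w hadj)
    rcases le_or_gt i j with hij | hij
    · exact Set.mem_Ioc.2 ⟨lt_of_le_of_lt (bP_mono Δ hij) h31, h32⟩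
    · exfalso
      have h4 := bP_mono Δ (show j+1 ≤ i from hij)
      have h5 := (Set.mem_Ioc.1 hrv).2
      have h6 := (Set.mem_Ioc.1 hvi).1
      linarith
  · rintro ⟨h1, h2⟩
    exact ⟨⟨i, hi, h1, h2⟩, h1⟩

lemma cand_neighbor_char {V : Type*} {G : SimpleGraph V} {Δ : ℕ} {r : V → ℝ} {i : ℕ} {v u : V}
    (hi : i ∈ Finset.Icc 1 (kP Δ)) (hadj : G.Adj v u)
    (hA : isCandAt G Δ r i v) (hB : isCand G Δ r u) :
    r u ∈ Set.Ioc (bP Δ i) (bP Δ (i+1)) ∧ ∀ w, G.Adj u w → r w ∈ Set.Ioc (bP Δ i) 1 := by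
  obtain ⟨j, hj, hru, hnb⟩ := hB
  obtain ⟨h1, h2⟩ := (isCandAt_char hi).1 hA
  have hrv := Set.mem_Ioc.1 (hnb v hadj.symm)
  have hji : j ≤ i := by
    by_contra hc
    push_neg at hc
    have h4 := bP_mono Δ (show i+1 ≤ j from hc)
    have h5 := (Set.mem_Ioc.1 h1).2
    linarith [hrv.1]
  have hij : i ≤ j := by
    by_contra hc
    push_neg at hc
    have h4 := bP_mono Δ (show j+1 ≤ i from hc)
    have h3 := (Set.mem_Ioc.1 (h2 u hadj)).1
    have h5 := (Set.mem_Ioc.1 hru).2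
    linarith
  have hji' : j = i := le_antisymm hji hij
  subst hji'
  exact ⟨hru, hnb⟩

set_option maxHeartbeats 1600000 in
theorem stmt2 {V : Type*} [Fintype V] [DecidableEq V]
    (G : SimpleGraph V) [DecidableRel G.Adj] (Δ : ℕ) (hΔ : 1000 < Δ)
    (hreg : G.IsRegularOfDegree Δ) (htri : G.CliqueFree 3)
    (v : V) (i : ℕ) (hi : i ∈ Finset.Icc 1 (kP Δ)) :
    ENNReal.ofReal (1 / 5) * rankMeasure V {r | isCandAt G Δ r i v} ≤
      rankMeasure V {r | inIS G Δ r v ∧ isCandAt G Δ r i v} := by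
  classical
  obtain ⟨hi1, hik⟩ := Finset.mem_Icc.1 hi
  have hΔpos : 0 < Δ := by omega
  have hΔ0 : (0:ℝ) < (Δ:ℝ) := by exact_mod_cast hΔpos
  have h2Δ : 2 ≤ Δ := by omega
  have he : (2.7:ℝ) < Real.exp 1 := by linarith [Real.exp_one_gt_d9]
  have ha5 : (5:ℝ) ≤ aP i := aP_ge i
  have haa' : aP i ≤ aP (i+1) := aP_mono (Nat.le_succ i)
  have ha'rec : aP (i+1) = Real.exp (aP i - 3) := by
    show aRec (i + 1 - 1) = Real.exp (aRec (i-1) - 3)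
    rw [show i + 1 - 1 = (i-1) + 1 by omega]
    rfl
  have hkey : Real.exp 1 * aP (i+1) ≤ (Δ:ℝ) := key_bound hi1 hik
  have ha'pos : (0:ℝ) < aP (i+1) := by linarith
  have hb0 : 0 < bP Δ i := div_pos (by linarith) hΔ0
  have hbb' : bP Δ i ≤ bP Δ (i+1) := bP_mono Δ (Nat.le_succ i)
  have hb'half : bP Δ (i+1) ≤ 1/2 := by
    rw [bP, div_le_iff₀ hΔ0]
    nlinarith
  have hb'le1 : bP Δ (i+1) ≤ 1 := by linarith
  have hbhalf : bP Δ i ≤ 1/2 := le_trans hbb' hb'half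
  have hl0 : (0:ℝ) ≤ bP Δ (i+1) - bP Δ i := by linarith
  have hp0 : (0:ℝ) ≤ 1 - bP Δ i := by linarith
  have hp1 : 1 - bP Δ i ≤ 1 := by linarith
  -- the candidate set as a product set
  have hA_eq : {r : V → ℝ | isCandAt G Δ r i v} =
      Set.univ.pi (fun w => if w = v then Set.Ioc (bP Δ i) (bP Δ (i+1))
        else if G.Adj v w then Set.Ioc (bP Δ i) 1 else Set.univ) := by
    ext r
    simp only [Set.mem_setOf_eq, Set.mem_pi, Set.mem_univ, true_implies]
    rw [isCandAt_char hi]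
    constructor
    · rintro ⟨h1, h2⟩ w
      by_cases hw : w = v
      · rw [if_pos hw, hw]; exact h1
      · rw [if_neg hw]
        by_cases hadj : G.Adj v w
        · rw [if_pos hadj]; exact h2 w hadj
        · rw [if_neg hadj]; trivial
    · intro h
      have hv := h v
      rw [if_pos rfl] at hv
      refine ⟨hv, fun w hadj => ?_⟩
      have h2 := h w
      have hwv : w ≠ v := fun hh => G.irrefl (hh ▸ hadj)
      rw [if_neg hwv, if_pos hadj] at h2
      exact h2
  -- measure of the candidate set
  have hμA : rankMeasure V {r : V → ℝ | isCandAt G Δ r i v} =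
      ENNReal.ofReal (bP Δ (i+1) - bP Δ i) * ENNReal.ofReal (1 - bP Δ i) ^ Δ := by
    rw [hA_eq, rankMeasure_eq, Measure.pi_pi]
    have hc : ∀ w : V, mu0 (if w = v then Set.Ioc (bP Δ i) (bP Δ (i+1))
        else if G.Adj v w then Set.Ioc (bP Δ i) 1 else Set.univ)
        = (if w = v then ENNReal.ofReal (bP Δ (i+1) - bP Δ i)
          else if G.Adj v w then ENNReal.ofReal (1 - bP Δ i) else 1) := by
      intro w
      split_ifs
      · exact mu0_Ioc (le_of_lt hb0) hb'le1
      · exact mu0_Ioc (le_of_lt hb0) le_rfl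
      · exact measure_univ
    rw [Finset.prod_congr rfl (fun w _ => hc w), prod_ite_neighbor, hreg v]
  -- per-neighbor bound
  have hEbound : ∀ u, G.Adj v u →
      rankMeasure V ({r : V → ℝ | isCandAt G Δ r i v} ∩ {r | isCand G Δ r u}) ≤
        (ENNReal.ofReal (bP Δ (i+1) - bP Δ i) * ENNReal.ofReal (bP Δ (i+1) - bP Δ i)) *
          (ENNReal.ofReal (1 - bP Δ i) ^ (Δ-1) * ENNReal.ofReal (1 - bP Δ i) ^ (Δ-1)) := by
    intro u hu
    have hsub : {r : V → ℝ | isCandAt G Δ r i v} ∩ {r | isCand G Δ r u} ⊆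
        Set.univ.pi (fun w => if w = v ∨ w = u then Set.Ioc (bP Δ i) (bP Δ (i+1))
          else if G.Adj u w ∨ G.Adj v w then Set.Ioc (bP Δ i) 1 else Set.univ) := by
      rintro r ⟨hrA, hrB⟩
      obtain ⟨hru, hnbu⟩ := cand_neighbor_char hi hu hrA hrB
      obtain ⟨hrv, hnbv⟩ := (isCandAt_char hi).1 hrA
      intro w _
      dsimp only
      by_cases hw : w = v ∨ w = u
      · rw [if_pos hw]
        rcases hw with hw | hw
        · rw [hw]; exact hrv
        · rw [hw]; exact hru
      · rw [if_neg hw]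
        by_cases hadj : G.Adj u w ∨ G.Adj v w
        · rw [if_pos hadj]
          rcases hadj with hadj | hadj
          · exact hnbu w hadj
          · exact hnbv w hadj
        · rw [if_neg hadj]; trivial
    refine le_trans (measure_mono hsub) ?_
    rw [rankMeasure_eq, Measure.pi_pi]
    have hc : ∀ w : V, mu0 (if w = v ∨ w = u then Set.Ioc (bP Δ i) (bP Δ (i+1))
        else if G.Adj u w ∨ G.Adj v w then Set.Ioc (bP Δ i) 1 else Set.univ)
        = (if w = v ∨ w = u then ENNReal.ofReal (bP Δ (i+1) - bP Δ i)
          else if G.Adj u w ∨ G.Adj v w then ENNReal.ofReal (1 - bP Δ i) else 1) := by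
      intro w
      split_ifs
      · exact mu0_Ioc (le_of_lt hb0) hb'le1
      · exact mu0_Ioc (le_of_lt hb0) le_rfl
      · exact measure_univ
    rw [Finset.prod_congr rfl (fun w _ => hc w), prod_ite_two G hu htri, hreg u, hreg v]
  -- union bound
  have hsplit : {r : V → ℝ | isCandAt G Δ r i v} ⊆
      {r : V → ℝ | inIS G Δ r v ∧ isCandAt G Δ r i v} ∪
        ⋃ u ∈ G.neighborFinset v, ({r : V → ℝ | isCandAt G Δ r i v} ∩ {r | isCand G Δ r u}) := by
    intro r hr
    by_cases hc : ∀ u, G.Adj v u → ¬ isCand G Δ r u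
    · exact Or.inl ⟨⟨hr.1, hc⟩, hr⟩
    · push_neg at hc
      obtain ⟨u, hu1, hu2⟩ := hc
      refine Or.inr ?_
      rw [Set.mem_iUnion₂]
      exact ⟨u, (SimpleGraph.mem_neighborFinset _ _ _).2 hu1, hr, hu2⟩
  have hunion : rankMeasure V {r : V → ℝ | isCandAt G Δ r i v} ≤
      rankMeasure V {r : V → ℝ | inIS G Δ r v ∧ isCandAt G Δ r i v} +
        ∑ u ∈ G.neighborFinset v,
          rankMeasure V ({r : V → ℝ | isCandAt G Δ r i v} ∩ {r | isCand G Δ r u}) := by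
    refine le_trans (measure_mono hsplit) (le_trans (measure_union_le _ _) ?_)
    exact add_le_add_right (measure_biUnion_finset_le _ _) _
  -- sum bound
  have hsum : ∑ u ∈ G.neighborFinset v,
      rankMeasure V ({r : V → ℝ | isCandAt G Δ r i v} ∩ {r | isCand G Δ r u}) ≤
      (Δ : ℝ≥0∞) * ((ENNReal.ofReal (bP Δ (i+1) - bP Δ i) * ENNReal.ofReal (bP Δ (i+1) - bP Δ i)) *
          (ENNReal.ofReal (1 - bP Δ i) ^ (Δ-1) * ENNReal.ofReal (1 - bP Δ i) ^ (Δ-1))) := by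
    refine le_trans (Finset.sum_le_sum (fun u hu =>
      hEbound u ((SimpleGraph.mem_neighborFinset _ _ _).1 hu))) ?_
    have hcard : (G.neighborFinset v).card = Δ := hreg v
    rw [Finset.sum_const, hcard, nsmul_eq_mul]
  -- the key real inequality
  have hreal : (Δ : ℝ) * (((bP Δ (i+1) - bP Δ i) * (bP Δ (i+1) - bP Δ i)) *
        ((1 - bP Δ i) ^ (Δ-1) * (1 - bP Δ i) ^ (Δ-1))) ≤
      (4/5) * ((bP Δ (i+1) - bP Δ i) * (1 - bP Δ i) ^ Δ) := by
    have hpow : (1 - bP Δ i) ^ (Δ-1) * (1 - bP Δ i) ^ (Δ-1) =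
        (1 - bP Δ i) ^ Δ * (1 - bP Δ i) ^ (Δ-2) := by
      rw [← pow_add, ← pow_add]
      congr 1
      omega
    have hDl : (Δ:ℝ) * (bP Δ (i+1) - bP Δ i) ≤ aP (i+1) := by
      have : (Δ:ℝ) * bP Δ (i+1) = aP (i+1) := by
        rw [bP, mul_div_cancel₀ _ (ne_of_gt hΔ0)]
      nlinarith
    have hpe : (1 - bP Δ i) ^ (Δ-2) ≤ Real.exp (1 - aP i) := by
      have h1 : (1 - bP Δ i) ≤ Real.exp (- bP Δ i) := by
        have := Real.add_one_le_exp (- bP Δ i); linarith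
      have h2 : (1 - bP Δ i) ^ (Δ-2) ≤ Real.exp (- bP Δ i) ^ (Δ-2) :=
        pow_le_pow_left₀ hp0 h1 _
      refine le_trans h2 ?_
      rw [← Real.exp_nat_mul]
      apply Real.exp_le_exp.2
      have hcast : ((Δ-2 : ℕ) : ℝ) = (Δ:ℝ) - 2 := by
        rw [Nat.cast_sub h2Δ]; norm_num
      rw [hcast]
      have hfrac : bP Δ i * ((Δ:ℝ) - 2) = aP i - 2 * aP i / Δ := by
        rw [bP]; field_simp
      have h2a : 2 * aP i / Δ ≤ 1 := by
        rw [div_le_one hΔ0]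
        nlinarith
      nlinarith [hfrac]
    have hmain : (Δ:ℝ) * (bP Δ (i+1) - bP Δ i) * (1 - bP Δ i) ^ (Δ-2) ≤ 4/5 := by
      have h1 : (Δ:ℝ) * (bP Δ (i+1) - bP Δ i) * (1 - bP Δ i) ^ (Δ-2) ≤
          aP (i+1) * Real.exp (1 - aP i) := by
        apply mul_le_mul hDl hpe (by positivity) (by linarith)
      have h2 : aP (i+1) * Real.exp (1 - aP i) = Real.exp (-2 : ℝ) := by
        rw [ha'rec, ← Real.exp_add]; ring_nf
      have h3 : Real.exp (-2:ℝ) ≤ 4/5 := by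
        rw [Real.exp_neg]
        rw [inv_le_comm₀ (Real.exp_pos 2) (by norm_num)]
        linarith [exp_two_ge]
      linarith
    calc (Δ : ℝ) * (((bP Δ (i+1) - bP Δ i) * (bP Δ (i+1) - bP Δ i)) *
        ((1 - bP Δ i) ^ (Δ-1) * (1 - bP Δ i) ^ (Δ-1)))
        = ((Δ:ℝ) * (bP Δ (i+1) - bP Δ i) * (1 - bP Δ i) ^ (Δ-2)) *
          ((bP Δ (i+1) - bP Δ i) * (1 - bP Δ i) ^ Δ) := by rw [hpow]; ring
      _ ≤ (4/5) * ((bP Δ (i+1) - bP Δ i) * (1 - bP Δ i) ^ Δ) := by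
          apply mul_le_mul_of_nonneg_right hmain (by positivity)
  -- transfer to ENNReal
  have hENN : (Δ : ℝ≥0∞) * ((ENNReal.ofReal (bP Δ (i+1) - bP Δ i) * ENNReal.ofReal (bP Δ (i+1) - bP Δ i)) *
          (ENNReal.ofReal (1 - bP Δ i) ^ (Δ-1) * ENNReal.ofReal (1 - bP Δ i) ^ (Δ-1))) ≤
      ENNReal.ofReal (4/5) * (ENNReal.ofReal (bP Δ (i+1) - bP Δ i) * ENNReal.ofReal (1 - bP Δ i) ^ Δ) := by
    have e1 : ENNReal.ofReal ((Δ : ℝ) * (((bP Δ (i+1) - bP Δ i) * (bP Δ (i+1) - bP Δ i)) *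
          ((1 - bP Δ i) ^ (Δ-1) * (1 - bP Δ i) ^ (Δ-1)))) =
        (Δ : ℝ≥0∞) * ((ENNReal.ofReal (bP Δ (i+1) - bP Δ i) * ENNReal.ofReal (bP Δ (i+1) - bP Δ i)) *
          (ENNReal.ofReal (1 - bP Δ i) ^ (Δ-1) * ENNReal.ofReal (1 - bP Δ i) ^ (Δ-1))) := by
      rw [ENNReal.ofReal_mul (show (0:ℝ) ≤ (Δ:ℝ) by positivity),
        ENNReal.ofReal_mul (show (0:ℝ) ≤ (bP Δ (i+1) - bP Δ i) * (bP Δ (i+1) - bP Δ i) by positivity),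
        ENNReal.ofReal_mul hl0,
        ENNReal.ofReal_mul (show (0:ℝ) ≤ (1 - bP Δ i) ^ (Δ-1) by positivity),
        ENNReal.ofReal_pow hp0, ENNReal.ofReal_natCast]
    have e2 : ENNReal.ofReal ((4/5 : ℝ) * ((bP Δ (i+1) - bP Δ i) * (1 - bP Δ i) ^ Δ)) =
        ENNReal.ofReal (4/5) * (ENNReal.ofReal (bP Δ (i+1) - bP Δ i) * ENNReal.ofReal (1 - bP Δ i) ^ Δ) := by
      rw [ENNReal.ofReal_mul (show (0:ℝ) ≤ (4/5:ℝ) by norm_num),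
        ENNReal.ofReal_mul hl0, ENNReal.ofReal_pow hp0]
    calc (Δ : ℝ≥0∞) * ((ENNReal.ofReal (bP Δ (i+1) - bP Δ i) * ENNReal.ofReal (bP Δ (i+1) - bP Δ i)) *
          (ENNReal.ofReal (1 - bP Δ i) ^ (Δ-1) * ENNReal.ofReal (1 - bP Δ i) ^ (Δ-1)))
        = ENNReal.ofReal ((Δ : ℝ) * (((bP Δ (i+1) - bP Δ i) * (bP Δ (i+1) - bP Δ i)) *
          ((1 - bP Δ i) ^ (Δ-1) * (1 - bP Δ i) ^ (Δ-1)))) := e1.symm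
      _ ≤ ENNReal.ofReal ((4/5 : ℝ) * ((bP Δ (i+1) - bP Δ i) * (1 - bP Δ i) ^ Δ)) :=
          ENNReal.ofReal_le_ofReal hreal
      _ = ENNReal.ofReal (4/5) * (ENNReal.ofReal (bP Δ (i+1) - bP Δ i) * ENNReal.ofReal (1 - bP Δ i) ^ Δ) := e2
  -- conclude
  haveI : IsProbabilityMeasure (rankMeasure V) := by
    rw [rankMeasure_eq]
    infer_instance
  have hfin : ENNReal.ofReal (4/5) * rankMeasure V {r : V → ℝ | isCandAt G Δ r i v} ≠ ⊤ :=
    ENNReal.mul_ne_top ENNReal.ofReal_ne_top (measure_ne_top _ _)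
  have htot : rankMeasure V {r : V → ℝ | isCandAt G Δ r i v} ≤
      rankMeasure V {r : V → ℝ | inIS G Δ r v ∧ isCandAt G Δ r i v} +
        ENNReal.ofReal (4/5) * rankMeasure V {r : V → ℝ | isCandAt G Δ r i v} := by
    refine le_trans hunion (add_le_add_right ?_ _)
    rw [hμA]
    exact le_trans hsum hENN
  have hone : ENNReal.ofReal (1/5) * rankMeasure V {r : V → ℝ | isCandAt G Δ r i v} +
      ENNReal.ofReal (4/5) * rankMeasure V {r : V → ℝ | isCandAt G Δ r i v} =
      rankMeasure V {r : V → ℝ | isCandAt G Δ r i v} := by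
    rw [← add_mul, ← ENNReal.ofReal_add (by norm_num) (by norm_num)]
    norm_num
  refine (ENNReal.add_le_add_iff_right hfin).1 ?_
  rw [hone]
  exact htot
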